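/- arXiv:1807.10217 — 2 statements merged into one kernel-verified Lean document; each statement's English description precedes it below -/
import Mathlib

section
/- The maps T : P(w) → P(w*) and T' : P(w*) → P(w) are both bijections, and they are inverse to one another; specifically T ∘ T' is the identity on P(w*), and since |P(w)| = |P(w*)|, T' ∘ T is also the identity. -/
open scoped BigOperators Classical

noncomputable section

/-- A triangular array of size `n`: entries `y i j` for `1 ≤ i ≤ n`, `1 ≤ j ≤ n - i + 1`
(zero outside this range), weakly decreasing along ladders: `y (i-1) (j+1) ≤ y i j`. -/
def IsTri (n : ℕ) (y : ℕ → ℕ → ℕ) : Prop :=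
  (∀ i j, ¬(1 ≤ i ∧ i ≤ n ∧ 1 ≤ j ∧ j ≤ n - i + 1) → y i j = 0) ∧
  (∀ i j, 2 ≤ i → i ≤ n → 1 ≤ j → j ≤ n - i + 1 → y (i - 1) (j + 1) ≤ y i j)

/-- The dimension vector of a triangular array: the `i`-th chute sum. -/
def udim (n : ℕ) (y : ℕ → ℕ → ℕ) (i : ℕ) : ℕ := ∑ j ∈ Finset.Icc 1 (n - i + 1), y i j

/-- The set `P(w)` of triangular arrays of size `n` with dimension vector `w`. -/
def InP (n : ℕ) (w : ℕ → ℕ) (y : ℕ → ℕ → ℕ) : Prop :=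
  IsTri n y ∧ ∀ i, 1 ≤ i → i ≤ n → udim n y i = w i

/-- The set `B(w)`: families `(b i j)` for `1 ≤ i ≤ j ≤ n` (zero outside) with
`∑ b i j • γ_{ij} = w`, i.e. for each `1 ≤ k ≤ n`, `∑_{i ≤ k ≤ j} b i j = w k`. -/
def InB (n : ℕ) (w : ℕ → ℕ) (b : ℕ → ℕ → ℕ) : Prop :=
  (∀ i j, ¬(1 ≤ i ∧ i ≤ j ∧ j ≤ n) → b i j = 0) ∧
  ∀ k, 1 ≤ k → k ≤ n → (∑ i ∈ Finset.Icc 1 k, ∑ j ∈ Finset.Icc k n, b i j) = w k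

/-- The map `ν : P(w) → B(w)`. -/
def nuMap (n : ℕ) (y : ℕ → ℕ → ℕ) : ℕ → ℕ → ℕ := fun i j =>
  if 1 ≤ i ∧ i ≤ j ∧ j ≤ n then y i (j - i + 1) - y (i - 1) (j - i + 2) else 0

/-- The map `ν̄ : B(w) → P(w)`. -/
def nubarMap (n : ℕ) (b : ℕ → ℕ → ℕ) : ℕ → ℕ → ℕ := fun i j =>
  if 1 ≤ i ∧ i ≤ n ∧ 1 ≤ j ∧ j ≤ n - i + 1 then ∑ h ∈ Finset.Icc 1 i, b h (i + j - 1) else 0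

/-- `Raise Y i j` increments the entry in chute `i`, column `j`. -/
def Raise (y : ℕ → ℕ → ℕ) (i j : ℕ) : ℕ → ℕ → ℕ := fun p q =>
  if p = i ∧ q = j then y p q + 1 else y p q

/-- `Lower Y i j` decrements the entry in chute `i`, column `j`. -/
def Lower (y : ℕ → ℕ → ℕ) (i j : ℕ) : ℕ → ℕ → ℕ := fun p q =>
  if p = i ∧ q = j then y p q - 1 else y p q

/-- `K_i(Y,k) = max({1} ∪ {j : 2 ≤ j ≤ k, y i j < y (i+1) (j-1)})`. -/
def Kval (y : ℕ → ℕ → ℕ) (i k : ℕ) : ℕ :=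
  ((Finset.Icc 2 k).filter (fun j => y i j < y (i + 1) (j - 1))).sup id ⊔ 1

/-- Procedure `a`: `a(Y,i,k) = (Raise(Y,i,K_i(Y,k)), i-1, K_i(Y,k))`. -/
def aStep (t : (ℕ → ℕ → ℕ) × ℕ × ℕ) : (ℕ → ℕ → ℕ) × ℕ × ℕ :=
  (Raise t.1 t.2.1 (Kval t.1 t.2.1 t.2.2), t.2.1 - 1, Kval t.1 t.2.1 t.2.2)

/-- Procedure `A_i`: apply `a` exactly `i` times starting from `(Y, i, n - i + 1)`. -/
def Aproc (n i : ℕ) (y : ℕ → ℕ → ℕ) : ℕ → ℕ → ℕ := (aStep^[i] (y, i, n - i + 1)).1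

/-- `Del↘(Y)` : delete the first chute. -/
def delChute (y : ℕ → ℕ → ℕ) : ℕ → ℕ → ℕ := fun i j =>
  if 1 ≤ i ∧ 1 ≤ j then y (i + 1) j else 0

/-- `Y ∪↘ Q` : adjoin `Q` as the new topmost chute. -/
def adjChute (y : ℕ → ℕ → ℕ) (q : ℕ → ℕ) : ℕ → ℕ → ℕ := fun i j =>
  if i = 0 then 0 else if i = 1 then q j else y (i - 1) j

/-- The set whose infimum is `I(Y,k)`; `I(Y,k) < ∞` iff this set is nonempty. -/
def Iset (n : ℕ) (y : ℕ → ℕ → ℕ) (k : ℕ) : Set ℕ := {j | k ≤ j ∧ j ≤ n ∧ 0 < y 1 j}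

/-- `I(Y,k)`: the smallest `j ≥ k` with `y 1 j > 0`. -/
def Idef (n : ℕ) (y : ℕ → ℕ → ℕ) (k : ℕ) : ℕ := sInf (Iset n y k)

/-- The set whose infimum is `J(Y,k)`; `J(Y,k) < ∞` iff this set is nonempty. -/
def Jset (n : ℕ) (y : ℕ → ℕ → ℕ) (k : ℕ) : Set ℕ :=
  {j | Idef n y k < j ∧ j ≤ n ∧ y 1 j < y 2 (j - 1)}

/-- `J(Y,k)`: the smallest `j > I(Y,k)` with `y 1 j < y 2 (j-1)`. -/
def Jdef (n : ℕ) (y : ℕ → ℕ → ℕ) (k : ℕ) : ℕ := sInf (Jset n y k)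

/-- Procedure `B`, by induction on the size `n`. -/
def Bproc : ℕ → (ℕ → ℕ → ℕ) → ℕ → ((ℕ → ℕ → ℕ) × ℕ)
  | 0, y, _ => (y, 1)
  | n + 1, y, k =>
    if (Jset (n + 1) y k).Nonempty then
      let zr := Bproc n (delChute y) (Jdef (n + 1) y k - 1)
      (Lower (adjChute zr.1 (y 1)) 1 (Idef (n + 1) y k), zr.2 + 1)
    else (Lower y 1 (Idef (n + 1) y k), 1)

/-- Apply `A_m^{y_{N+1-m,m} - y_{N-m,m+1}}` for `m = 1, …, M` (innermost `A_1`). -/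
def applyAs (N : ℕ) (y : ℕ → ℕ → ℕ) : ℕ → (ℕ → ℕ → ℕ) → (ℕ → ℕ → ℕ)
  | 0, z => z
  | m + 1, z => (Aproc N (m + 1))^[y (N - m) (m + 1) - y (N - m - 1) (m + 2)] (applyAs N y m z)

/-- `Del↗(Y)` : delete the last ladder (of an array of size `n`). -/
def delLadder (n : ℕ) (y : ℕ → ℕ → ℕ) : ℕ → ℕ → ℕ := fun i j =>
  if 1 ≤ i ∧ 1 ≤ j ∧ i + j ≤ n then y i j else 0

/-- The combinatorial Fourier transform `T`. -/
def Tmap : ℕ → (ℕ → ℕ → ℕ) → (ℕ → ℕ → ℕ)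
  | 0, y => y
  | 1, y => y
  | n + 2, y =>
      applyAs (n + 2) y (n + 2) (adjChute (Tmap (n + 1) (delLadder (n + 2) y)) (fun _ => 0))

/-- Iterate procedure `B` (with `k = 1`), recording the list of produced integers `q`. -/
def Biter (n : ℕ) (y : ℕ → ℕ → ℕ) : ℕ → ((ℕ → ℕ → ℕ) × List ℕ)
  | 0 => (y, [])
  | m + 1 =>
    let p := Biter n y m
    let b := Bproc n p.1 1
    (b.1, p.2 ++ [b.2])

/-- `Y ∪↗ P` : adjoin `P` as the new bottommost ladder (result of size `N`). -/
def adjLadder (N : ℕ) (z : ℕ → ℕ → ℕ) (p : ℕ → ℕ) : ℕ → ℕ → ℕ := fun i j =>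
  if 1 ≤ i ∧ 1 ≤ j ∧ i + j = N + 1 then p j else z i j

/-- The inverse combinatorial Fourier transform `T'`. -/
def Tinv : ℕ → (ℕ → ℕ → ℕ) → (ℕ → ℕ → ℕ)
  | 0, y => y
  | 1, y => y
  | n + 2, y =>
    let r := Biter (n + 2) y (udim (n + 2) y 1)
    adjLadder (n + 2) (Tinv (n + 1) (delChute r.1)) (fun j => r.2.countP (fun q => decide (j ≤ q)))

/-- The composition `x_{i+j-1} ∘ ⋯ ∘ x_{i+1} ∘ x_i` (`j` maps, starting at vertex `i`). -/
def chainMap (w : ℕ → ℕ) (x : ∀ m : ℕ, (Fin (w m) → ℂ) →ₗ[ℂ] (Fin (w (m + 1)) → ℂ)) (i : ℕ) :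
    ∀ j : ℕ, (Fin (w i) → ℂ) →ₗ[ℂ] (Fin (w (i + j)) → ℂ)
  | 0 => LinearMap.id
  | j + 1 => (x (i + j)).comp (chainMap w x i j)

/-- `u` is a Jordan basis of type `Y` for the representation `x`. -/
def IsJordanBasis (n : ℕ) (w : ℕ → ℕ) (y : ℕ → ℕ → ℕ)
    (x : ∀ m : ℕ, (Fin (w m) → ℂ) →ₗ[ℂ] (Fin (w (m + 1)) → ℂ))
    (u : ∀ m : ℕ, ℕ → ℕ → (Fin (w m) → ℂ)) : Prop :=
  (∀ i, 1 ≤ i → i ≤ n →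
    (LinearIndependent ℂ
      (fun p : {p : ℕ × ℕ // 1 ≤ p.1 ∧ p.1 ≤ n - i + 1 ∧ 1 ≤ p.2 ∧ p.2 ≤ y i p.1} =>
        u i p.1.1 p.1.2) ∧
    Submodule.span ℂ
      (Set.range (fun p : {p : ℕ × ℕ // 1 ≤ p.1 ∧ p.1 ≤ n - i + 1 ∧ 1 ≤ p.2 ∧ p.2 ≤ y i p.1} =>
        u i p.1.1 p.1.2)) = ⊤)) ∧
  (∀ i j k, 1 ≤ i → i + 1 ≤ n → 1 ≤ j → j ≤ n - i + 1 → 1 ≤ k → k ≤ y i j →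
    x i (u i j k) = if 2 ≤ j then u (i + 1) (j - 1) k else 0)

/-- `V` is a kernel flag of type `Y` (with the convention `V i 0 = ⊥`). -/
def IsKerFlag (n : ℕ) (w : ℕ → ℕ) (y : ℕ → ℕ → ℕ)
    (V : ∀ i : ℕ, ℕ → Submodule ℂ (Fin (w i) → ℂ)) : Prop :=
  ∀ i, 1 ≤ i → i ≤ n →
    V i 0 = ⊥ ∧
    (∀ j, j ≤ n - i → V i j ≤ V i (j + 1)) ∧
    V i (n - i + 1) = ⊤ ∧
    (∀ j, 1 ≤ j → j ≤ n - i + 1 → Module.finrank ℂ (V i j) = ∑ h ∈ Finset.Icc 1 j, y i h)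

/-- The representation `x` preserves the kernel flag `V`. -/
def PreservesFlag (n : ℕ) (w : ℕ → ℕ)
    (x : ∀ m : ℕ, (Fin (w m) → ℂ) →ₗ[ℂ] (Fin (w (m + 1)) → ℂ))
    (V : ∀ i : ℕ, ℕ → Submodule ℂ (Fin (w i) → ℂ)) : Prop :=
  ∀ i, 1 ≤ i → i + 1 ≤ n → ∀ j, 1 ≤ j → j ≤ n - i + 1 → ∀ v ∈ V i j,
    (j = 1 → x i v = 0) ∧ (2 ≤ j → x i v ∈ V (i + 1) (j - 1))

/-- The flag of kernels `V i j = ker (x_{i+j-1} ∘ ⋯ ∘ x_i)`. -/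
def kerFlag (w : ℕ → ℕ) (x : ∀ m : ℕ, (Fin (w m) → ℂ) →ₗ[ℂ] (Fin (w (m + 1)) → ℂ)) :
    ∀ i : ℕ, ℕ → Submodule ℂ (Fin (w i) → ℂ) := fun i j => LinearMap.ker (chainMap w x i j)

/-- The Lie-algebra stabilizer of the flag `V` inside `𝔤(w) = ∏ End(ℂ^{w_i})`. -/
def stabFlagSub (n : ℕ) (w : ℕ → ℕ) (V : ∀ i : ℕ, ℕ → Submodule ℂ (Fin (w i) → ℂ)) :
    Submodule ℂ (∀ i : Fin n, (Fin (w (i.val + 1)) → ℂ) →ₗ[ℂ] (Fin (w (i.val + 1)) → ℂ)) where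
  carrier := {g | ∀ (i : Fin n) (j : ℕ), 1 ≤ j → j ≤ n - (i.val + 1) + 1 →
    ∀ v ∈ V (i.val + 1) j, g i v ∈ V (i.val + 1) j}
  add_mem' := by
    intro a b ha hb i j h1 h2 v hv
    simpa using (V (i.val + 1) j).add_mem (ha i j h1 h2 v hv) (hb i j h1 h2 v hv)
  zero_mem' := by
    intro i j h1 h2 v hv
    simpa using (V (i.val + 1) j).zero_mem
  smul_mem' := by
    intro c a ha i j h1 h2 v hv
    simpa using (V (i.val + 1) j).smul_mem c (ha i j h1 h2 v hv)

/-- The linear space `E(w)^V` of representations preserving the kernel flag `V`. -/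
def presFlagSub (n : ℕ) (w : ℕ → ℕ) (V : ∀ i : ℕ, ℕ → Submodule ℂ (Fin (w i) → ℂ)) :
    Submodule ℂ (∀ i : Fin (n - 1), (Fin (w (i.val + 1)) → ℂ) →ₗ[ℂ] (Fin (w (i.val + 2)) → ℂ)) where
  carrier := {x | ∀ (i : Fin (n - 1)) (j : ℕ), 1 ≤ j → j ≤ n - (i.val + 1) + 1 →
    ∀ v ∈ V (i.val + 1) j,
      (j = 1 → x i v = 0) ∧ (2 ≤ j → x i v ∈ V (i.val + 2) (j - 1))}
  add_mem' := by
    intro a b ha hb i j h1 h2 v hv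
    obtain ⟨ha1, ha2⟩ := ha i j h1 h2 v hv
    obtain ⟨hb1, hb2⟩ := hb i j h1 h2 v hv
    constructor
    · intro hj
      simp [ha1 hj, hb1 hj]
    · intro hj
      simpa using (V (i.val + 2) (j - 1)).add_mem (ha2 hj) (hb2 hj)
  zero_mem' := by
    intro i j h1 h2 v hv
    constructor
    · intro _; simp
    · intro _
      simpa using (V (i.val + 2) (j - 1)).zero_mem
  smul_mem' := by
    intro c a ha i j h1 h2 v hv
    obtain ⟨ha1, ha2⟩ := ha i j h1 h2 v hv
    constructor
    · intro hj
      simp [ha1 hj]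
    · intro hj
      simpa using (V (i.val + 2) (j - 1)).smul_mem c (ha2 hj)

end

/-!
`T(Y)` is built from `T(Del↗ Y) ∪↘ 0` by the raising procedures `A_m`, and each `A_m` raises
one box in every chute `1, …, m` along a path of columns. Write `T(Y) = A_{m*}(T(Y⁻))`, where
`m*` is the last ladder position with a positive exponent and `Y⁻` is `Y` with one box removed
from each of the first `m*` entries of its last ladder. Successive paths move weakly to the left,
so the last path starts at the leftmost nonzero entry of the top chute of `T(Y)`; there procedure
`B` finds it, walks back along it and returns `(T(Y⁻), m*)`. Iterating `B` therefore strips the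
whole last ladder of `Y` off `T(Y)`, recording its entries in the counts `p_j`, and leaves
`T(Del↗ Y) ∪↘ 0`, so that by induction on the size `T' ∘ T = id`. As `T` maps `P(w)` into
`P(w*)` and `P(w*)` into `P(w)`, injectively, the two finite sets have the same size and `T` is a
bijection with inverse `T'`.
-/

section RaisePath

lemma one_le_Kval (y : ℕ → ℕ → ℕ) (i k : ℕ) : 1 ≤ Kval y i k := le_sup_right

lemma Kval_le (y : ℕ → ℕ → ℕ) (i : ℕ) {k : ℕ} (hk : 1 ≤ k) : Kval y i k ≤ k :=
  sup_le (Finset.sup_le fun _ hj => (Finset.mem_Icc.1 (Finset.mem_filter.1 hj).1).2) hk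

lemma not_lt_of_Kval_lt {y : ℕ → ℕ → ℕ} {i k j : ℕ} (h1 : Kval y i k < j) (h2 : j ≤ k) :
    ¬ y i j < y (i + 1) (j - 1) := by
  intro hlt
  have hmem : j ∈ (Finset.Icc 2 k).filter (fun j => y i j < y (i + 1) (j - 1)) :=
    Finset.mem_filter.2 ⟨Finset.mem_Icc.2 ⟨lt_of_le_of_lt (one_le_Kval y i k) h1, h2⟩, hlt⟩
  exact absurd (le_trans (Finset.le_sup (f := id) hmem) le_sup_left) (not_le.2 h1)

lemma Kval_spec {y : ℕ → ℕ → ℕ} {i k : ℕ} (h : 2 ≤ Kval y i k) :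
    y i (Kval y i k) < y (i + 1) (Kval y i k - 1) := by
  set s := (Finset.Icc 2 k).filter (fun j => y i j < y (i + 1) (j - 1))
  have hK : Kval y i k = s.sup id := by
    refine sup_eq_left.2 (le_of_not_gt fun h' => ?_)
    have : Kval y i k = 1 := sup_eq_right.2 (by omega)
    omega
  have hne : s.Nonempty := by
    by_contra hne
    rw [Finset.not_nonempty_iff_eq_empty] at hne
    simp [hK, hne] at h
  obtain ⟨b, hb, hbe⟩ := Finset.exists_mem_eq_sup s hne id
  rw [hK, hbe]
  exact (Finset.mem_filter.1 hb).2

/-- The column at which chute `r` is raised by the procedure `A_i` (`i` steps of `a`) started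
at column bound `k`. -/
def pathCol : (ℕ → ℕ → ℕ) → ℕ → ℕ → ℕ → ℕ
  | _, 0, _, _ => 0
  | Z, i + 1, k, r =>
    if r = i + 1 then Kval Z (i + 1) k
    else pathCol (Raise Z (i + 1) (Kval Z (i + 1) k)) i (Kval Z (i + 1) k) r

def raisePath : (ℕ → ℕ → ℕ) → ℕ → ℕ → (ℕ → ℕ → ℕ)
  | Z, 0, _ => Z
  | Z, i + 1, k => raisePath (Raise Z (i + 1) (Kval Z (i + 1) k)) i (Kval Z (i + 1) k)

lemma pathCol_self (Z : ℕ → ℕ → ℕ) (i k : ℕ) : pathCol Z (i + 1) k (i + 1) = Kval Z (i + 1) k :=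
  if_pos rfl

lemma pathCol_of_ne {Z : ℕ → ℕ → ℕ} {i k r : ℕ} (hr : r ≠ i + 1) :
    pathCol Z (i + 1) k r = pathCol (Raise Z (i + 1) (Kval Z (i + 1) k)) i (Kval Z (i + 1) k) r :=
  if_neg hr

lemma aStep_iterate (i : ℕ) (Z : ℕ → ℕ → ℕ) (k : ℕ) :
    aStep^[i] (Z, i, k) = (raisePath Z i k, 0, if i = 0 then k else pathCol Z i k 1) := by
  induction i generalizing Z k with
  | zero => simp [raisePath]
  | succ i ih =>
    rw [Function.iterate_succ_apply, show aStep (Z, i + 1, k) =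
      (Raise Z (i + 1) (Kval Z (i + 1) k), i, Kval Z (i + 1) k) from rfl, ih]
    rcases Nat.eq_zero_or_pos i with rfl | hi
    · simp [raisePath, pathCol]
    · simp only [raisePath, pathCol_of_ne (show 1 ≠ i + 1 by omega), if_neg hi.ne',
        Nat.add_one_ne_zero, if_false]

lemma Aproc_eq_raisePath (n m : ℕ) (Z : ℕ → ℕ → ℕ) :
    Aproc n m Z = raisePath Z m (n - m + 1) := by
  rw [Aproc, aStep_iterate]

lemma one_le_pathCol {i r : ℕ} (Z : ℕ → ℕ → ℕ) (k : ℕ) (h1 : 1 ≤ r) (h2 : r ≤ i) :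
    1 ≤ pathCol Z i k r := by
  induction i generalizing Z k with
  | zero => omega
  | succ i ih =>
    by_cases hr : r = i + 1
    · rw [hr, pathCol_self]; exact one_le_Kval _ _ _
    · rw [pathCol_of_ne hr]; exact ih _ _ (by omega)

lemma pathCol_le {i k r : ℕ} (Z : ℕ → ℕ → ℕ) (hk : 1 ≤ k) (h1 : 1 ≤ r) (h2 : r ≤ i) :
    pathCol Z i k r ≤ k := by
  induction i generalizing Z k with
  | zero => omega
  | succ i ih =>
    by_cases hr : r = i + 1
    · rw [hr, pathCol_self]; exact Kval_le _ _ hk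
    · rw [pathCol_of_ne hr]
      exact (ih _ (one_le_Kval _ _ _) (by omega)).trans (Kval_le _ _ hk)

lemma pathCol_le_pathCol_succ {i k r : ℕ} (Z : ℕ → ℕ → ℕ) (h1 : 1 ≤ r) (h2 : r < i) :
    pathCol Z i k r ≤ pathCol Z i k (r + 1) := by
  induction i generalizing Z k with
  | zero => omega
  | succ i ih =>
    rw [pathCol_of_ne (show r ≠ i + 1 by omega)]
    by_cases hr : r + 1 = i + 1
    · rw [hr, pathCol_self]
      exact pathCol_le _ (one_le_Kval _ _ _) h1 (by omega)
    · rw [pathCol_of_ne hr]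
      exact ih _ (by omega)

lemma raisePath_apply (i : ℕ) (Z : ℕ → ℕ → ℕ) (k p q : ℕ) :
    raisePath Z i k p q = Z p q + if 1 ≤ p ∧ p ≤ i ∧ q = pathCol Z i k p then 1 else 0 := by
  induction i generalizing Z k with
  | zero => simp only [raisePath]; rw [if_neg (by omega)]; rfl
  | succ i ih =>
    simp only [raisePath]
    rw [ih]
    by_cases hp : p = i + 1
    · subst hp
      rw [pathCol_self, if_neg (by omega)]
      simp only [Raise, true_and]
      split_ifs <;> omega
    · rw [pathCol_of_ne hp]
      simp only [Raise, hp, false_and, if_false]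
      split_ifs <;> omega

def pathStage (Z : ℕ → ℕ → ℕ) (i k r : ℕ) : ℕ → ℕ → ℕ := fun p q =>
  Z p q + if r + 1 ≤ p ∧ p ≤ i ∧ q = pathCol Z i k p then 1 else 0

def pathBound (Z : ℕ → ℕ → ℕ) (i k r : ℕ) : ℕ := if r = i then k else pathCol Z i k (r + 1)

lemma pathCol_eq_Kval {i r : ℕ} (Z : ℕ → ℕ → ℕ) (k : ℕ) (h1 : 1 ≤ r) (h2 : r ≤ i) :
    pathCol Z i k r = Kval (pathStage Z i k r) r (pathBound Z i k r) := by
  induction i generalizing Z k with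
  | zero => omega
  | succ i ih =>
    by_cases hr : r = i + 1
    · subst hr
      have hstage : pathStage Z (i + 1) k (i + 1) = Z := by
        funext p q
        simp only [pathStage]
        rw [if_neg (by omega), Nat.add_zero]
      rw [pathCol_self, hstage, pathBound, if_pos rfl]
    · rw [pathCol_of_ne hr, ih _ _ (by omega)]
      have hstage : pathStage (Raise Z (i + 1) (Kval Z (i + 1) k)) i (Kval Z (i + 1) k) r =
          pathStage Z (i + 1) k r := by
        funext p q
        simp only [pathStage, Raise]
        by_cases hp : p = i + 1
        · subst hp
          rw [pathCol_self]
          by_cases hq : q = Kval Z (i + 1) k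
          · rw [if_pos ⟨rfl, hq⟩, if_neg (by omega), if_pos ⟨by omega, le_rfl, hq⟩]
          · simp [hq]
        · rw [pathCol_of_ne hp]
          simp only [hp, false_and, if_false]
          split_ifs <;> omega
      have hbound : pathBound (Raise Z (i + 1) (Kval Z (i + 1) k)) i (Kval Z (i + 1) k) r =
          pathBound Z (i + 1) k r := by
        by_cases hri : r = i
        · subst hri
          rw [pathBound, pathBound, if_pos rfl, if_neg hr, pathCol_self]
        · rw [pathBound, pathBound, if_neg hri, if_neg hr,
            pathCol_of_ne (show r + 1 ≠ i + 1 by omega)]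
      rw [hstage, hbound]

lemma one_le_pathBound {Z : ℕ → ℕ → ℕ} {i k r : ℕ} (hk : 1 ≤ k) (h1 : 1 ≤ r) (h2 : r ≤ i) :
    1 ≤ pathBound Z i k r := by
  unfold pathBound
  split_ifs
  · exact hk
  · exact one_le_pathCol Z k (by omega) (by omega)

lemma pathCol_le_pathBound {Z : ℕ → ℕ → ℕ} {i k r : ℕ} (hk : 1 ≤ k) (h1 : 1 ≤ r) (h2 : r ≤ i) :
    pathCol Z i k r ≤ pathBound Z i k r := by
  rw [pathCol_eq_Kval Z k h1 h2]
  exact Kval_le _ _ (one_le_pathBound hk h1 h2)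

lemma pathStage_self (Z : ℕ → ℕ → ℕ) (i k r q : ℕ) : pathStage Z i k r r q = Z r q := by
  simp [pathStage]

lemma pathStage_succ (Z : ℕ → ℕ → ℕ) (i k r q : ℕ) :
    pathStage Z i k r (r + 1) q =
      Z (r + 1) q + if r + 1 ≤ i ∧ q = pathCol Z i k (r + 1) then 1 else 0 := by
  simp [pathStage]

lemma pathCol_max {Z : ℕ → ℕ → ℕ} {i k r j : ℕ} (h1 : 1 ≤ r) (h2 : r ≤ i)
    (h3 : pathCol Z i k r < j) (h4 : j ≤ pathBound Z i k r) :
    ¬ Z r j < Z (r + 1) (j - 1) + if r + 1 ≤ i ∧ j - 1 = pathCol Z i k (r + 1) then 1 else 0 := by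
  rw [pathCol_eq_Kval Z k h1 h2] at h3
  simpa only [pathStage_self, pathStage_succ] using not_lt_of_Kval_lt h3 h4

lemma pathCol_spec {Z : ℕ → ℕ → ℕ} {i k r : ℕ} (h1 : 1 ≤ r) (h2 : r ≤ i)
    (h3 : 2 ≤ pathCol Z i k r) :
    Z r (pathCol Z i k r) < Z (r + 1) (pathCol Z i k r - 1) +
      if r + 1 ≤ i ∧ pathCol Z i k r - 1 = pathCol Z i k (r + 1) then 1 else 0 := by
  rw [pathCol_eq_Kval Z k h1 h2] at h3 ⊢
  simpa only [pathStage_self, pathStage_succ, ← pathCol_eq_Kval Z k h1 h2] using Kval_spec h3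

end RaisePath

section ProcedureB

lemma Kval_delChute (Z : ℕ → ℕ → ℕ) {i : ℕ} (k : ℕ) (hi : 1 ≤ i) :
    Kval (delChute Z) i k = Kval Z (i + 1) k := by
  unfold Kval
  congr 2
  refine Finset.filter_congr fun j hj => ?_
  have hj2 : 2 ≤ j := (Finset.mem_Icc.1 hj).1
  simp only [delChute, if_pos (show 1 ≤ i ∧ 1 ≤ j from ⟨hi, by omega⟩),
    if_pos (show 1 ≤ i + 1 ∧ 1 ≤ j - 1 from ⟨by omega, by omega⟩)]

lemma delChute_Raise (Z : ℕ → ℕ → ℕ) {i c : ℕ} (hi : 2 ≤ i) (hc : 1 ≤ c) :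
    delChute (Raise Z i c) = Raise (delChute Z) (i - 1) c := by
  funext p q
  simp only [delChute, Raise]
  split_ifs <;> first | rfl | omega

lemma delChute_Raise_one (Z : ℕ → ℕ → ℕ) (c : ℕ) : delChute (Raise Z 1 c) = delChute Z := by
  funext p q
  simp only [delChute, Raise]
  split_ifs <;> first | rfl | omega

lemma delChute_raisePath (i : ℕ) (Z : ℕ → ℕ → ℕ) (k : ℕ) :
    delChute (raisePath Z (i + 1) k) = raisePath (delChute Z) i k := by
  induction i generalizing Z k with
  | zero => exact delChute_Raise_one _ _
  | succ i ih =>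
    rw [raisePath, ih, delChute_Raise _ (by omega) (one_le_Kval _ _ _),
      ← Kval_delChute Z k (by omega : 1 ≤ i + 1)]
    rfl

lemma pathCol_delChute {i r : ℕ} (Z : ℕ → ℕ → ℕ) (k : ℕ) (h1 : 1 ≤ r) (h2 : r ≤ i) :
    pathCol (delChute Z) i k r = pathCol Z (i + 1) k (r + 1) := by
  induction i generalizing Z k with
  | zero => omega
  | succ i ih =>
    by_cases hr : r = i + 1
    · rw [hr, pathCol_self, pathCol_self, Kval_delChute Z k (by omega)]
    · rw [pathCol_of_ne hr, pathCol_of_ne (show r + 1 ≠ i + 1 + 1 by omega),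
        Kval_delChute Z k (by omega),
        show i + 1 = i + 1 + 1 - 1 from rfl, ← delChute_Raise _ (by omega) (one_le_Kval _ _ _)]
      exact ih _ _ (by omega)

lemma IsTri.delChute {s : ℕ} {Z : ℕ → ℕ → ℕ} (h : IsTri (s + 1) Z) : IsTri s (delChute Z) := by
  refine ⟨fun i j hij => ?_, fun i j h2 h3 h4 h5 => ?_⟩
  · simp only [_root_.delChute]
    split_ifs with hp
    · exact h.1 _ _ (fun ⟨_, _, _, _⟩ => hij ⟨hp.1, by omega, hp.2, by omega⟩)
    · rfl
  · simp only [_root_.delChute, if_pos (show 1 ≤ i - 1 ∧ 1 ≤ j + 1 by omega),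
      if_pos (show 1 ≤ i ∧ 1 ≤ j by omega), show i - 1 + 1 = i + 1 - 1 by omega]
    exact h.2 (i + 1) j (by omega) (by omega) h4 (by omega)

lemma raisePath_apply_of_le {m r : ℕ} (Z : ℕ → ℕ → ℕ) (b q : ℕ) (h1 : 1 ≤ r) (h2 : r ≤ m) :
    raisePath Z m b r q = Z r q + if q = pathCol Z m b r then 1 else 0 := by
  rw [raisePath_apply]
  simp [h1, h2]

lemma Bproc_succ_of_nonempty {s k : ℕ} {y : ℕ → ℕ → ℕ} (h : (Jset (s + 1) y k).Nonempty) :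
    Bproc (s + 1) y k =
      (Lower (adjChute (Bproc s (delChute y) (Jdef (s + 1) y k - 1)).1 (y 1)) 1 (Idef (s + 1) y k),
        (Bproc s (delChute y) (Jdef (s + 1) y k - 1)).2 + 1) := by
  rw [Bproc, if_pos h]

lemma Bproc_succ_of_not_nonempty {s k : ℕ} {y : ℕ → ℕ → ℕ} (h : ¬ (Jset (s + 1) y k).Nonempty) :
    Bproc (s + 1) y k = (Lower y 1 (Idef (s + 1) y k), 1) := by
  rw [Bproc, if_neg h]

lemma Idef_raisePath {s m b k : ℕ} (Z : ℕ → ℕ → ℕ) (hm : 1 ≤ m) (hk : k ≤ pathCol Z m b 1)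
    (hs : pathCol Z m b 1 ≤ s) (hzero : ∀ j, k ≤ j → j < pathCol Z m b 1 → Z 1 j = 0) :
    Idef s (raisePath Z m b) k = pathCol Z m b 1 := by
  have hW (q : ℕ) := raisePath_apply_of_le Z b q le_rfl hm
  have hmem : pathCol Z m b 1 ∈ Iset s (raisePath Z m b) k :=
    ⟨hk, hs, by rw [hW, if_pos rfl]; omega⟩
  refine le_antisymm (Nat.sInf_le hmem) (le_csInf ⟨_, hmem⟩ fun j ⟨hj1, _, hj3⟩ => ?_)
  by_contra! hlt
  rw [hW, if_neg hlt.ne, hzero j hj1 hlt] at hj3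
  omega

lemma Jset_raisePath_one {s k : ℕ} (Z : ℕ → ℕ → ℕ)
    (hI : Idef s (raisePath Z 1 s) k = Kval Z 1 s) : ¬ (Jset s (raisePath Z 1 s) k).Nonempty := by
  rintro ⟨j, hj1, hj2, hj3⟩
  rw [hI] at hj1
  change Raise Z 1 (Kval Z 1 s) 1 j < Raise Z 1 (Kval Z 1 s) 2 (j - 1) at hj3
  simp only [Raise] at hj3
  rw [if_neg (by omega), if_neg (by omega)] at hj3
  exact not_lt_of_Kval_lt hj1 hj2 hj3

lemma Jdef_raisePath {s m k : ℕ} (Z : ℕ → ℕ → ℕ) (hm : 2 ≤ m) (hms : m ≤ s) (hT : IsTri s Z)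
    (hI : Idef s (raisePath Z m (s - m + 1)) k = pathCol Z m (s - m + 1) 1) :
    (Jset s (raisePath Z m (s - m + 1)) k).Nonempty ∧
      Jdef s (raisePath Z m (s - m + 1)) k = pathCol Z m (s - m + 1) 2 + 1 := by
  set b := s - m + 1
  have hc12 : pathCol Z m b 1 ≤ pathCol Z m b 2 := pathCol_le_pathCol_succ Z le_rfl (by omega)
  have hc2b : pathCol Z m b 2 ≤ b := pathCol_le Z (by omega) (by omega) (by omega)
  have hW1 (q : ℕ) := raisePath_apply_of_le Z b q le_rfl (by omega : 1 ≤ m)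
  have hW2 (q : ℕ) := raisePath_apply_of_le Z b q (by omega) hm
  have hmem : pathCol Z m b 2 + 1 ∈ Jset s (raisePath Z m b) k := by
    refine ⟨by rw [hI]; omega, by omega, ?_⟩
    rw [hW1, if_neg (by omega), Nat.add_sub_cancel, hW2, if_pos rfl]
    have := hT.2 2 (pathCol Z m b 2) le_rfl (by omega) (one_le_pathCol Z b (by omega) hm)
      (by omega)
    norm_num at this
    omega
  refine ⟨⟨_, hmem⟩, le_antisymm (Nat.sInf_le hmem) (le_csInf ⟨_, hmem⟩ fun j hj => ?_)⟩
  obtain ⟨hj1, hj2, hj3⟩ := hj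
  rw [hI] at hj1
  by_contra! hlt
  rw [hW1, if_neg (by omega), hW2] at hj3
  have hbound : pathBound Z m b 1 = pathCol Z m b 2 := if_neg (by omega)
  have hmax := pathCol_max (Z := Z) (i := m) (k := b) (r := 1) (j := j) le_rfl (by omega) hj1
    (by rw [hbound]; omega)
  norm_num at hmax
  split_ifs at hj3 hmax <;> omega

lemma Lower_Raise (Z : ℕ → ℕ → ℕ) (i c : ℕ) : Lower (Raise Z i c) i c = Z := by
  funext p q
  by_cases h : p = i ∧ q = c <;> simp [Lower, Raise, h]

lemma Lower_adjChute_delChute {s c : ℕ} {Z : ℕ → ℕ → ℕ} (hT : IsTri s Z) {u : ℕ → ℕ}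
    (hu : ∀ q, u q = Z 1 q + if q = c then 1 else 0) :
    Lower (adjChute (delChute Z) u) 1 c = Z := by
  funext p q
  have h0 := hT.1 p q
  simp only [Lower, adjChute, delChute, hu]
  by_cases hp1 : p = 1
  · subst hp1
    by_cases hq : q = c <;> simp [hq]
  · rw [if_neg fun h => hp1 h.1]
    split_ifs <;> first | omega | rw [show p - 1 + 1 = p by omega]

theorem Bproc_raisePath {m s k : ℕ} (Z : ℕ → ℕ → ℕ) (hm : 1 ≤ m) (hms : m ≤ s) (hT : IsTri s Z)
    (hk : k ≤ pathCol Z m (s - m + 1) 1)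
    (hzero : ∀ j, k ≤ j → j < pathCol Z m (s - m + 1) 1 → Z 1 j = 0) :
    Bproc s (raisePath Z m (s - m + 1)) k = (Z, m) := by
  induction m generalizing s Z k with
  | zero => omega
  | succ m ih =>
    obtain ⟨s, rfl⟩ : ∃ s', s = s' + 1 := ⟨s - 1, by omega⟩
    have hcs : pathCol Z (m + 1) (s + 1 - (m + 1) + 1) 1 ≤ s + 1 :=
      (pathCol_le Z (by omega) le_rfl hm).trans (by omega)
    have hI := Idef_raisePath Z hm hk hcs hzero
    rcases Nat.eq_zero_or_pos m with rfl | hm0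
    · simp only [zero_add, Nat.add_sub_cancel, pathCol_self] at hI ⊢
      rw [Bproc_succ_of_not_nonempty (Jset_raisePath_one Z hI), hI]
      exact congrArg (·, 1) (Lower_Raise Z 1 _)
    · obtain ⟨hJ, hJdef⟩ := Jdef_raisePath Z (by omega) hms hT hI
      have hb : s + 1 - (m + 1) + 1 = s - m + 1 := by omega
      rw [Bproc_succ_of_nonempty hJ, hI, hJdef, Nat.add_sub_cancel, hb, delChute_raisePath,
        ih (delChute Z) hm0 (by omega) hT.delChute
          (by rw [pathCol_delChute Z _ le_rfl hm0]) (fun j h1 h2 => by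
            rw [pathCol_delChute Z _ le_rfl hm0] at h2
            exact absurd (h1.trans_lt h2) (lt_irrefl _))]
      exact congrArg (·, m + 1) (Lower_adjChute_delChute hT
        (raisePath_apply_of_le Z _ · le_rfl hm))

end ProcedureB

section PathMonotonicity

lemma pathCol_raisePath_le_of_succ {m' m b' b r : ℕ} (Z : ℕ → ℕ → ℕ) (hr : 1 ≤ r)
    (hrm : r ≤ m') (hm : m' ≤ m) (hb1 : 1 ≤ b) (hb : b ≤ b')
    (hnext : r < m' → pathCol (raisePath Z m' b') m b (r + 1) ≤ pathCol Z m' b' (r + 1)) :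
    pathCol (raisePath Z m' b') m b r ≤ pathCol Z m' b' r := by
  by_contra! hlt
  have hd2 : 2 ≤ pathCol (raisePath Z m' b') m b r :=
    lt_of_le_of_lt (one_le_pathCol Z b' hr hrm) hlt
  have hspec := pathCol_spec hr (hrm.trans hm) hd2
  have hd_next : r < m →
      pathCol (raisePath Z m' b') m b r ≤ pathCol (raisePath Z m' b') m b (r + 1) := fun h =>
    (pathCol_le_pathBound hb1 hr (hrm.trans hm)).trans_eq (if_neg h.ne)
  have hd_bound : pathCol (raisePath Z m' b') m b r ≤ pathBound Z m' b' r := by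
    have hdb := pathCol_le (raisePath Z m' b') hb1 hr (hrm.trans hm)
    unfold pathBound
    split_ifs with h
    · omega
    · exact (hd_next (by omega)).trans (hnext (by omega))
  have hmax := pathCol_max hr hrm hlt hd_bound
  simp only [raisePath_apply_of_le Z b' _ hr hrm, raisePath_apply m' Z b' (r + 1)] at hspec
  split_ifs at hspec hmax <;> omega

lemma pathCol_raisePath_le {m' m b' b r : ℕ} (Z : ℕ → ℕ → ℕ) (hr : 1 ≤ r) (hrm : r ≤ m')
    (hm : m' ≤ m) (hb1 : 1 ≤ b) (hb : b ≤ b') :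
    pathCol (raisePath Z m' b') m b r ≤ pathCol Z m' b' r := by
  induction hd : m' - r generalizing r with
  | zero => exact pathCol_raisePath_le_of_succ Z hr hrm hm hb1 hb (by omega)
  | succ t ih =>
    exact pathCol_raisePath_le_of_succ Z hr hrm hm hb1 hb fun _ =>
      ih (by omega) (by omega) (by omega)

end PathMonotonicity

section Bookkeeping

lemma IsTri.raise {s i c : ℕ} {Z : ℕ → ℕ → ℕ} (hT : IsTri s Z) (hi1 : 1 ≤ i) (his : i ≤ s)
    (hc1 : 1 ≤ c) (hcs : c ≤ s - i + 1) (hlt : 2 ≤ c → Z i c < Z (i + 1) (c - 1)) :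
    IsTri s (Raise Z i c) := by
  refine ⟨fun p q hpq => ?_, fun p q h2 h3 h4 h5 => ?_⟩
  · have : ¬ (p = i ∧ q = c) := fun ⟨hp, hq⟩ => hpq ⟨hp ▸ hi1, hp ▸ his, hq ▸ hc1, hp ▸ hq ▸ hcs⟩
    simp only [Raise, if_neg this]
    exact hT.1 p q hpq
  · have h := hT.2 p q h2 h3 h4 h5
    simp only [Raise]
    by_cases ha : p - 1 = i ∧ q + 1 = c
    · obtain ⟨rfl, rfl⟩ := ha
      rw [if_pos ⟨rfl, rfl⟩, if_neg (by omega), show p = p - 1 + 1 by omega]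
      simpa using hlt (by omega)
    · split_ifs <;> omega

lemma IsTri.raisePath {s i k : ℕ} {Z : ℕ → ℕ → ℕ} (hT : IsTri s Z) (hk1 : 1 ≤ k)
    (hks : k ≤ s - i + 1) (his : i ≤ s) : IsTri s (raisePath Z i k) := by
  induction i generalizing Z k with
  | zero => exact hT
  | succ i ih =>
    have hK := Kval_le Z (i + 1) hk1
    exact ih (hT.raise (by omega) his (one_le_Kval _ _ _) (by omega) Kval_spec)
      (one_le_Kval _ _ _) (by omega) (by omega)

lemma udim_raisePath {s i k : ℕ} (Z : ℕ → ℕ → ℕ) (hk1 : 1 ≤ k) (hks : k ≤ s - i + 1) (p : ℕ) :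
    udim s (raisePath Z i k) p = udim s Z p + if 1 ≤ p ∧ p ≤ i then 1 else 0 := by
  unfold udim
  simp only [raisePath_apply, Finset.sum_add_distrib]
  congr 1
  by_cases hpi : 1 ≤ p ∧ p ≤ i
  · have hmem : pathCol Z i k p ∈ Finset.Icc 1 (s - p + 1) := Finset.mem_Icc.2
      ⟨one_le_pathCol Z k hpi.1 hpi.2, (pathCol_le Z hk1 hpi.1 hpi.2).trans (by omega)⟩
    simp [hpi, hmem]
  · rw [if_neg hpi]
    exact Finset.sum_eq_zero fun j _ => if_neg fun h => hpi ⟨h.1, h.2.1⟩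

lemma IsTri.adjChute_zero {N : ℕ} {X : ℕ → ℕ → ℕ} (hX : IsTri N X) :
    IsTri (N + 1) (adjChute X (fun _ => 0)) := by
  refine ⟨fun i j hij => ?_, fun i j h2 h3 h4 h5 => ?_⟩
  · simp only [adjChute]
    split_ifs
    · rfl
    · rfl
    · exact hX.1 _ _ fun ⟨hi1, hiN, hj1, hjN⟩ => hij ⟨by omega, by omega, hj1, by omega⟩
  · simp only [adjChute, if_neg (show i ≠ 0 by omega), if_neg (show i ≠ 1 by omega)]
    split_ifs
    · omega
    · exact Nat.zero_le _
    · exact hX.2 (i - 1) j (by omega) (by omega) h4 (by omega)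

lemma udim_adjChute_zero_one (N : ℕ) (X : ℕ → ℕ → ℕ) :
    udim N (adjChute X (fun _ => 0)) 1 = 0 :=
  Finset.sum_eq_zero fun _ _ => rfl

lemma udim_adjChute_zero (N : ℕ) (X : ℕ → ℕ → ℕ) {p : ℕ} (hp : 1 ≤ p) :
    udim (N + 1) (adjChute X (fun _ => 0)) (p + 1) = udim N X p := by
  unfold udim
  rw [show N + 1 - (p + 1) + 1 = N - p + 1 by omega]
  refine Finset.sum_congr rfl fun j _ => ?_
  simp only [adjChute, if_neg (show p + 1 ≠ 0 by omega), if_neg (show p + 1 ≠ 1 by omega),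
    Nat.add_sub_cancel]

lemma IsTri.delLadder {N : ℕ} {y : ℕ → ℕ → ℕ} (hT : IsTri (N + 1) y) :
    IsTri N (delLadder (N + 1) y) := by
  refine ⟨fun i j hij => ?_, fun i j h2 h3 h4 h5 => ?_⟩
  · simp only [_root_.delLadder]
    split_ifs
    · exact hT.1 _ _ fun ⟨_, _, _, _⟩ => hij ⟨by omega, by omega, by omega, by omega⟩
    · rfl
  · simp only [_root_.delLadder, if_pos (show 1 ≤ i - 1 ∧ 1 ≤ j + 1 ∧ i - 1 + (j + 1) ≤ N + 1 by
      omega), if_pos (show 1 ≤ i ∧ 1 ≤ j ∧ i + j ≤ N + 1 by omega)]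
    exact hT.2 i j h2 (by omega) h4 (by omega)

lemma udim_delLadder_add (N : ℕ) (y : ℕ → ℕ → ℕ) {i : ℕ} (h1 : 1 ≤ i) (h2 : i ≤ N) :
    udim N (delLadder (N + 1) y) i + y i (N + 1 - i + 1) = udim (N + 1) y i := by
  unfold udim
  rw [show N + 1 - i + 1 = N - i + 1 + 1 by omega,
    Finset.sum_Icc_succ_top (by omega : 1 ≤ N - i + 1 + 1)]
  congr 1
  refine Finset.sum_congr rfl fun j hj => ?_
  rw [Finset.mem_Icc] at hj
  simp only [delLadder, if_pos (show 1 ≤ i ∧ 1 ≤ j ∧ i + j ≤ N + 1 by omega)]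

lemma udim_self (N : ℕ) (y : ℕ → ℕ → ℕ) : udim N y N = y N 1 := by
  simp [udim]

end Bookkeeping

section LastLadder

/-- The exponent `y_{N+1-r,r} - y_{N-r,r+1}` of `A_r` in the definition of `T`. -/
def ladderExp (N : ℕ) (y : ℕ → ℕ → ℕ) (r : ℕ) : ℕ := y (N - (r - 1)) r - y (N - r) (r + 1)

/-- `m*`: the largest `r ≤ N` for which `A_r` occurs in `T(Y)`, so the last one applied. -/
def ladderTop (N : ℕ) (y : ℕ → ℕ → ℕ) : ℕ :=
  ((Finset.Icc 1 N).filter (fun r => 0 < ladderExp N y r)).sup id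

/-- `Y⁻`: one box removed from each of the first `m*` entries of the last ladder. -/
def ladderDec (N : ℕ) (y : ℕ → ℕ → ℕ) : ℕ → ℕ → ℕ := fun i j =>
  if i + j = N + 1 ∧ j ≤ ladderTop N y then y i j - 1 else y i j

lemma applyAs_succ (N : ℕ) (y : ℕ → ℕ → ℕ) (m : ℕ) (z : ℕ → ℕ → ℕ) :
    applyAs N y (m + 1) z = (Aproc N (m + 1))^[ladderExp N y (m + 1)] (applyAs N y m z) := by
  simp only [applyAs, ladderExp, Nat.add_sub_cancel, Nat.sub_sub]

lemma ladder_antitone {N : ℕ} {y : ℕ → ℕ → ℕ} (hT : IsTri N y) {a b : ℕ} (ha : 1 ≤ a)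
    (hab : a ≤ b) : y (N + 1 - b) b ≤ y (N + 1 - a) a := by
  induction b, hab using Nat.le_induction with
  | base => exact le_rfl
  | succ b hab ih =>
    refine le_trans ?_ ih
    by_cases hbN : b + 1 ≤ N
    · have h := hT.2 (N + 1 - b) b (by omega) (by omega) (by omega) (by omega)
      rwa [show N + 1 - b - 1 = N + 1 - (b + 1) by omega] at h
    · rw [hT.1 _ _ (by omega)]
      exact Nat.zero_le _

lemma ladder_eq_zero {N : ℕ} {y : ℕ → ℕ → ℕ} (hT : IsTri N y) (h0 : y N 1 = 0) {r : ℕ}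
    (hr : 1 ≤ r) : y (N + 1 - r) r = 0 := by
  have := ladder_antitone hT le_rfl hr
  rw [Nat.add_sub_cancel, h0] at this
  omega

lemma ladderExp_eq_zero {N : ℕ} {y : ℕ → ℕ → ℕ} (hT : IsTri N y) (h0 : y N 1 = 0) {r : ℕ}
    (hr : 1 ≤ r) : ladderExp N y r = 0 := by
  rw [ladderExp, show N - (r - 1) = N + 1 - r by omega, ladder_eq_zero hT h0 hr, Nat.zero_sub]

/-- The exponents telescope to `y N 1`, so one of them is positive when `y N 1` is. -/
lemma ladderTop_spec {N : ℕ} {y : ℕ → ℕ → ℕ} (hT : IsTri N y) (h1 : 0 < y N 1) :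
    1 ≤ ladderTop N y ∧ ladderTop N y ≤ N ∧ 0 < ladderExp N y (ladderTop N y) := by
  set s := (Finset.Icc 1 N).filter (fun r => 0 < ladderExp N y r)
  have hne : s.Nonempty := by
    by_contra hne
    have hz : ∀ r, 1 ≤ r → r ≤ N → ladderExp N y r = 0 := fun r h1 h2 => by
      by_contra h
      exact hne ⟨r, Finset.mem_filter.2 ⟨Finset.mem_Icc.2 ⟨h1, h2⟩, Nat.pos_of_ne_zero h⟩⟩
    have hchain : ∀ r, r ≤ N → y N 1 ≤ y (N - r) (r + 1) := by
      intro r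
      induction r with
      | zero => intro _; rfl
      | succ r ih =>
        intro hr
        have := hz (r + 1) (by omega) hr
        rw [ladderExp, show N - (r + 1 - 1) = N - r by omega] at this
        have := ih (by omega)
        omega
    have := hchain N le_rfl
    rw [Nat.sub_self, hT.1 0 (N + 1) (by omega)] at this
    omega
  obtain ⟨b, hb, hbe⟩ := Finset.exists_mem_eq_sup s hne id
  obtain ⟨hb, hpos⟩ := Finset.mem_filter.1 hb
  rw [Finset.mem_Icc] at hb
  rw [show ladderTop N y = b from hbe]
  exact ⟨hb.1, hb.2, hpos⟩

lemma ladderExp_eq_zero_of_ladderTop_lt {N : ℕ} {y : ℕ → ℕ → ℕ} (hT : IsTri N y) {r : ℕ}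
    (hr : ladderTop N y < r) : ladderExp N y r = 0 := by
  by_cases hrN : r ≤ N
  · by_contra hc
    have hmem : r ∈ (Finset.Icc 1 N).filter (fun r => 0 < ladderExp N y r) :=
      Finset.mem_filter.2 ⟨Finset.mem_Icc.2 ⟨by omega, hrN⟩, Nat.pos_of_ne_zero hc⟩
    exact absurd (Finset.le_sup (f := id) hmem) (not_le.2 hr)
  · rw [ladderExp, hT.1 _ _ (by omega), Nat.zero_sub]

lemma one_le_ladder {N : ℕ} {y : ℕ → ℕ → ℕ} (hT : IsTri N y) (h1 : 0 < y N 1) {r : ℕ}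
    (hr1 : 1 ≤ r) (hr2 : r ≤ ladderTop N y) : 1 ≤ y (N + 1 - r) r := by
  obtain ⟨hm1, hmN, hmE⟩ := ladderTop_spec hT h1
  have := ladder_antitone hT hr1 hr2
  rw [ladderExp, show N - (ladderTop N y - 1) = N + 1 - ladderTop N y by omega] at hmE
  omega

lemma ladderDec_of_ne {N : ℕ} (y : ℕ → ℕ → ℕ) {i j : ℕ} (h : i + j ≠ N + 1) :
    ladderDec N y i j = y i j :=
  if_neg fun u => h u.1

lemma ladderDec_of_le {N : ℕ} (y : ℕ → ℕ → ℕ) {i j : ℕ} (h : i + j = N + 1)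
    (hj : j ≤ ladderTop N y) : ladderDec N y i j = y i j - 1 :=
  if_pos ⟨h, hj⟩

lemma ladderDec_of_gt {N : ℕ} (y : ℕ → ℕ → ℕ) {i j : ℕ} (hj : ladderTop N y < j) :
    ladderDec N y i j = y i j :=
  if_neg fun u => by omega

lemma ladderDec_corner {N : ℕ} {y : ℕ → ℕ → ℕ} (hT : IsTri N y) (h1 : 0 < y N 1) :
    ladderDec N y N 1 = y N 1 - 1 :=
  ladderDec_of_le y rfl (ladderTop_spec hT h1).1

lemma ladderExp_ladderDec_of_lt {N : ℕ} {y : ℕ → ℕ → ℕ} (hT : IsTri N y) (h1 : 0 < y N 1)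
    {r : ℕ} (hr1 : 1 ≤ r) (hr : r < ladderTop N y) :
    ladderExp N (ladderDec N y) r = ladderExp N y r := by
  have hmN := (ladderTop_spec hT h1).2.1
  have hpos : 1 ≤ y (N - r) (r + 1) := by
    have := one_le_ladder hT h1 (r := r + 1) (by omega) hr
    rwa [show N + 1 - (r + 1) = N - r by omega] at this
  rw [ladderExp, ladderExp, ladderDec_of_le y (by omega) hr.le,
    ladderDec_of_le y (by omega) (show r + 1 ≤ _ from hr)]
  omega

lemma ladderExp_ladderDec_ladderTop {N : ℕ} {y : ℕ → ℕ → ℕ} (hT : IsTri N y) (h1 : 0 < y N 1) :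
    ladderExp N (ladderDec N y) (ladderTop N y) = ladderExp N y (ladderTop N y) - 1 := by
  obtain ⟨hm1, hmN, hmE⟩ := ladderTop_spec hT h1
  rw [ladderExp] at hmE ⊢
  rw [ladderExp, ladderDec_of_le y (by omega) le_rfl, ladderDec_of_gt y (by omega)]
  omega

lemma ladderExp_ladderDec_of_gt {N : ℕ} (y : ℕ → ℕ → ℕ) {r : ℕ} (hr : ladderTop N y < r) :
    ladderExp N (ladderDec N y) r = ladderExp N y r := by
  rw [ladderExp, ladderExp, ladderDec_of_gt y hr, ladderDec_of_gt y (by omega)]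

lemma ladderTop_ladderDec_le {N : ℕ} {y : ℕ → ℕ → ℕ} (hT : IsTri N y) :
    ladderTop N (ladderDec N y) ≤ ladderTop N y := by
  refine Finset.sup_le fun r hr => show r ≤ _ from ?_
  by_contra! hc
  have := (Finset.mem_filter.1 hr).2
  rw [ladderExp_ladderDec_of_gt y hc, ladderExp_eq_zero_of_ladderTop_lt hT hc] at this
  exact lt_irrefl 0 this

lemma IsTri.ladderDec {N : ℕ} {y : ℕ → ℕ → ℕ} (hT : IsTri N y) (h1 : 0 < y N 1) :
    IsTri N (ladderDec N y) := by
  obtain ⟨hm1, hmN, hmE⟩ := ladderTop_spec hT h1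
  refine ⟨fun i j hij => ?_, fun i j h2 h3 h4 h5 => ?_⟩
  · have h0 := hT.1 i j hij
    simp only [_root_.ladderDec]
    split_ifs <;> omega
  · have htri := hT.2 i j h2 h3 h4 h5
    simp only [_root_.ladderDec]
    by_cases hd : i + j = N + 1
    · by_cases hj : j = ladderTop N y
      · rw [ladderExp, show N - (ladderTop N y - 1) = i by omega,
          show N - ladderTop N y = i - 1 by omega, ← hj] at hmE
        split_ifs <;> omega
      · split_ifs <;> omega
    · split_ifs <;> omega

lemma udim_ladderDec_add {N : ℕ} {y : ℕ → ℕ → ℕ} (hT : IsTri N y) (h1 : 0 < y N 1) {i : ℕ}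
    (hi1 : 1 ≤ i) (hiN : i ≤ N) :
    udim N (ladderDec N y) i + (if N + 1 - ladderTop N y ≤ i then 1 else 0) = udim N y i := by
  obtain ⟨hm1, hmN, -⟩ := ladderTop_spec hT h1
  unfold udim
  split_ifs with hcase
  · have hpos := one_le_ladder hT h1 (r := N - i + 1) (by omega) (by omega)
    rw [show N + 1 - (N - i + 1) = i by omega] at hpos
    rw [Finset.sum_Icc_succ_top (by omega), Finset.sum_Icc_succ_top (by omega),
      ladderDec_of_le y (i := i) (j := N - i + 1) (by omega) (by omega),
      Finset.sum_congr rfl fun j hj => ladderDec_of_ne y (by have := Finset.mem_Icc.1 hj; omega)]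
    omega
  · rw [Nat.add_zero]
    exact Finset.sum_congr rfl fun j _ => if_neg fun ⟨h, hj⟩ => by omega

end LastLadder

section Decomposition

lemma Tmap_add_two (n : ℕ) (y : ℕ → ℕ → ℕ) :
    Tmap (n + 2) y =
      applyAs (n + 2) y (n + 2) (adjChute (Tmap (n + 1) (delLadder (n + 2) y)) (fun _ => 0)) :=
  rfl

lemma applyAs_congr (N : ℕ) {y y' : ℕ → ℕ → ℕ} (z : ℕ → ℕ → ℕ) {M : ℕ}
    (h : ∀ r, 1 ≤ r → r ≤ M → ladderExp N y r = ladderExp N y' r) :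
    applyAs N y M z = applyAs N y' M z := by
  induction M with
  | zero => rfl
  | succ M ih =>
    rw [applyAs_succ, applyAs_succ, h (M + 1) (by omega) le_rfl,
      ih fun r h1 h2 => h r h1 (by omega)]

lemma applyAs_eq_of_ladderExp_eq_zero (N : ℕ) (y z : ℕ → ℕ → ℕ) {M M' : ℕ} (hM : M' ≤ M)
    (h : ∀ r, M' < r → r ≤ M → ladderExp N y r = 0) : applyAs N y M z = applyAs N y M' z := by
  induction M, hM using Nat.le_induction with
  | base => rfl
  | succ M hM ih =>
    rw [applyAs_succ, h (M + 1) (by omega) le_rfl, Function.iterate_zero, id,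
      ih fun r h1 h2 => h r h1 (by omega)]

lemma Tmap_of_corner_eq_zero {n : ℕ} {y : ℕ → ℕ → ℕ} (hT : IsTri (n + 2) y)
    (h0 : y (n + 2) 1 = 0) :
    Tmap (n + 2) y = adjChute (Tmap (n + 1) (delLadder (n + 2) y)) (fun _ => 0) := by
  rw [Tmap_add_two, applyAs_eq_of_ladderExp_eq_zero _ _ _ (Nat.zero_le _)
    fun r h1 _ => ladderExp_eq_zero hT h0 (by omega)]
  rfl

lemma delLadder_ladderDec (N : ℕ) (y : ℕ → ℕ → ℕ) :
    delLadder N (ladderDec N y) = delLadder N y := by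
  funext i j
  simp only [delLadder]
  split_ifs
  · exact ladderDec_of_ne y (by omega)
  · rfl

theorem Tmap_eq_raisePath_ladderDec {n : ℕ} {y : ℕ → ℕ → ℕ} (hT : IsTri (n + 2) y)
    (h1 : 0 < y (n + 2) 1) :
    Tmap (n + 2) y = raisePath (Tmap (n + 2) (ladderDec (n + 2) y)) (ladderTop (n + 2) y)
      (n + 2 - ladderTop (n + 2) y + 1) := by
  obtain ⟨hm1, hmN, hpos⟩ := ladderTop_spec hT h1
  have hE := ladderExp_ladderDec_ladderTop hT h1
  obtain ⟨M, hM⟩ : ∃ M, ladderTop (n + 2) y = M + 1 := ⟨_, (Nat.sub_add_cancel hm1).symm⟩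
  obtain ⟨e, he⟩ : ∃ e, ladderExp (n + 2) y (M + 1) = e + 1 :=
    ⟨_, (Nat.sub_add_cancel (hM ▸ hpos : 0 < ladderExp (n + 2) y (M + 1))).symm⟩
  rw [hM, he] at hE
  rw [Tmap_add_two, Tmap_add_two, delLadder_ladderDec,
    applyAs_eq_of_ladderExp_eq_zero _ _ _ hmN fun r hr _ =>
      ladderExp_eq_zero_of_ladderTop_lt hT hr,
    applyAs_eq_of_ladderExp_eq_zero _ _ _ hmN fun r hr _ => by
      rw [ladderExp_ladderDec_of_gt y hr, ladderExp_eq_zero_of_ladderTop_lt hT hr],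
    hM, applyAs_succ, applyAs_succ, hE, he, Nat.add_sub_cancel,
    applyAs_congr _ _ fun r hr1 hr2 => ladderExp_ladderDec_of_lt hT h1 hr1 (by omega),
    Function.iterate_succ_apply', Aproc_eq_raisePath]

end Decomposition

section TmapShape

lemma inP_Tmap_add_two_of_isTri {n : ℕ}
    (ih : ∀ y, IsTri (n + 1) y →
      InP (n + 1) (fun p => udim (n + 1) y (n + 1 + 1 - p)) (Tmap (n + 1) y))
    {y : ℕ → ℕ → ℕ} (hT : IsTri (n + 2) y) :
    InP (n + 2) (fun p => udim (n + 2) y (n + 2 + 1 - p)) (Tmap (n + 2) y) := by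
  induction ht : y (n + 2) 1 generalizing y with
  | zero =>
    obtain ⟨hXT, hXu⟩ := ih _ hT.delLadder
    rw [Tmap_of_corner_eq_zero hT ht]
    refine ⟨hXT.adjChute_zero, fun p hp1 hp2 => ?_⟩
    obtain rfl | ⟨p, rfl⟩ : p = 1 ∨ ∃ p', p = p' + 1 + 1 :=
      (Nat.lt_or_ge p 2).imp (by omega) fun _ => ⟨p - 2, by omega⟩
    · show _ = udim (n + 2) y (n + 2 + 1 - 1)
      rw [udim_adjChute_zero_one, Nat.add_sub_cancel, udim_self, ht]
    · have hlad := ladder_eq_zero hT ht (r := p + 1 + 1) (by omega)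
      have hdel := udim_delLadder_add (n + 1) y (i := n + 2 + 1 - (p + 1 + 1)) (by omega) (by omega)
      rw [udim_adjChute_zero _ _ (by omega), hXu (p + 1) (by omega) (by omega)]
      show udim (n + 1) _ (n + 1 + 1 - (p + 1)) = udim (n + 2) y (n + 2 + 1 - (p + 1 + 1))
      rw [show n + 1 + 1 - (p + 1) = n + 2 + 1 - (p + 1 + 1) by omega]
      rw [show n + 1 + 1 - (n + 2 + 1 - (p + 1 + 1)) + 1 = p + 1 + 1 by omega, hlad] at hdel
      exact hdel
  | succ t iht =>
    have hpos : 0 < y (n + 2) 1 := by omega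
    obtain ⟨hm1, hmN, -⟩ := ladderTop_spec hT hpos
    obtain ⟨hZT, hZu⟩ := iht (hT.ladderDec hpos) (by rw [ladderDec_corner hT hpos]; omega)
    rw [Tmap_eq_raisePath_ladderDec hT hpos]
    refine ⟨hZT.raisePath (by omega) (by omega) (by omega), fun p hp1 hp2 => ?_⟩
    have hdu := udim_ladderDec_add hT hpos (i := n + 2 + 1 - p) (by omega) (by omega)
    rw [udim_raisePath _ (by omega) le_rfl, hZu p hp1 hp2]
    split_ifs at hdu ⊢ <;> omega

theorem inP_Tmap_of_isTri (N : ℕ) {y : ℕ → ℕ → ℕ} (hT : IsTri N y) :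
    InP N (fun p => udim N y (N + 1 - p)) (Tmap N y) := by
  induction N generalizing y with
  | zero => exact ⟨hT, fun p h1 h2 => by omega⟩
  | succ N ih =>
    rcases N with _ | n
    · exact ⟨hT, fun p h1 h2 => by rw [show p = 1 by omega]; rfl⟩
    · exact inP_Tmap_add_two_of_isTri (fun y' h => ih h) hT

end TmapShape

section Inverse

/-- The column at which the raise path of the last `A_{m*}` enters the top chute of `T(Y)`. -/
def lastPathStart (n : ℕ) (y : ℕ → ℕ → ℕ) : ℕ :=
  pathCol (Tmap (n + 2) (ladderDec (n + 2) y)) (ladderTop (n + 2) y)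
    (n + 2 - ladderTop (n + 2) y + 1) 1

lemma Tmap_one_apply {n : ℕ} {y : ℕ → ℕ → ℕ} (hT : IsTri (n + 2) y)
    (h1 : 0 < y (n + 2) 1) (j : ℕ) :
    Tmap (n + 2) y 1 j =
      Tmap (n + 2) (ladderDec (n + 2) y) 1 j + if j = lastPathStart n y then 1 else 0 := by
  rw [Tmap_eq_raisePath_ladderDec hT h1, raisePath_apply_of_le _ _ _ le_rfl
    (ladderTop_spec hT h1).1, lastPathStart]

lemma lastPathStart_le_ladderDec {n : ℕ} {y : ℕ → ℕ → ℕ} (hT : IsTri (n + 2) y)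
    (h1 : 0 < y (n + 2) 1) (h2 : 0 < ladderDec (n + 2) y (n + 2) 1) :
    lastPathStart n y ≤ lastPathStart n (ladderDec (n + 2) y) := by
  have hT' := hT.ladderDec h1
  have hm1 := (ladderTop_spec hT' h2).1
  have hle := ladderTop_ladderDec_le hT
  have := pathCol_raisePath_le (m := ladderTop (n + 2) y) (b := n + 2 - ladderTop (n + 2) y + 1)
    (b' := n + 2 - ladderTop (n + 2) (ladderDec (n + 2) y) + 1)
    (Tmap (n + 2) (ladderDec (n + 2) (ladderDec (n + 2) y))) le_rfl hm1 hle (by omega) (by omega)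
  rwa [← Tmap_eq_raisePath_ladderDec hT' h2] at this

/-- Earlier raise paths start weakly to the right of later ones. -/
lemma Tmap_ladderDec_one_eq_zero {n : ℕ} {y : ℕ → ℕ → ℕ} (hT : IsTri (n + 2) y)
    (h1 : 0 < y (n + 2) 1) {j : ℕ} (hj : j < lastPathStart n y) :
    Tmap (n + 2) (ladderDec (n + 2) y) 1 j = 0 := by
  induction ht : y (n + 2) 1 generalizing y with
  | zero => omega
  | succ t ih =>
    have hT' := hT.ladderDec h1
    have hcorner : ladderDec (n + 2) y (n + 2) 1 = t := by rw [ladderDec_corner hT h1]; omega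
    rcases Nat.eq_zero_or_pos t with rfl | ht0
    · rw [Tmap_of_corner_eq_zero hT' hcorner]
      rfl
    · have hle := lastPathStart_le_ladderDec hT h1 (hcorner ▸ ht0)
      rw [Tmap_one_apply hT' (hcorner ▸ ht0), if_neg (by omega),
        ih hT' (hcorner ▸ ht0) (by omega) hcorner]

theorem Bproc_Tmap {n : ℕ} {y : ℕ → ℕ → ℕ} (hT : IsTri (n + 2) y) (h1 : 0 < y (n + 2) 1) :
    Bproc (n + 2) (Tmap (n + 2) y) 1 =
      (Tmap (n + 2) (ladderDec (n + 2) y), ladderTop (n + 2) y) := by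
  obtain ⟨hm1, hmN, -⟩ := ladderTop_spec hT h1
  rw [Tmap_eq_raisePath_ladderDec hT h1]
  exact Bproc_raisePath _ hm1 hmN (inP_Tmap_of_isTri _ (hT.ladderDec h1)).1
    (one_le_pathCol _ _ le_rfl hm1) fun j _ hj => Tmap_ladderDec_one_eq_zero hT h1 hj

lemma ladderDec_iterate {N : ℕ} {y : ℕ → ℕ → ℕ} (hT : IsTri N y) {t : ℕ} (ht : t ≤ y N 1) :
    IsTri N ((ladderDec N)^[t] y) ∧ (ladderDec N)^[t] y N 1 = y N 1 - t ∧
      ∀ i j, i + j ≠ N + 1 → (ladderDec N)^[t] y i j = y i j := by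
  induction t with
  | zero => exact ⟨hT, rfl, fun _ _ _ => rfl⟩
  | succ t ih =>
    obtain ⟨h1, h2, h3⟩ := ih (by omega)
    have hpos : 0 < (ladderDec N)^[t] y N 1 := by omega
    rw [Function.iterate_succ_apply']
    refine ⟨h1.ladderDec hpos, by rw [ladderDec_corner h1 hpos]; omega, fun i j hij => ?_⟩
    rw [ladderDec_of_ne _ hij, h3 i j hij]

theorem Biter_Tmap {n : ℕ} {y : ℕ → ℕ → ℕ} (hT : IsTri (n + 2) y) {t : ℕ} (ht : t ≤ y (n + 2) 1) :
    (Biter (n + 2) (Tmap (n + 2) y) t).1 = Tmap (n + 2) ((ladderDec (n + 2))^[t] y) ∧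
      ∀ j, 1 ≤ j →
        (Biter (n + 2) (Tmap (n + 2) y) t).2.countP (fun q => decide (j ≤ q)) +
          (ladderDec (n + 2))^[t] y (n + 2 + 1 - j) j = y (n + 2 + 1 - j) j := by
  induction t with
  | zero => exact ⟨rfl, fun j _ => by simp [Biter]⟩
  | succ t ih =>
    obtain ⟨ih1, ih2⟩ := ih (by omega)
    obtain ⟨hT', hcorner, -⟩ := ladderDec_iterate hT (t := t) (by omega)
    set y' := (ladderDec (n + 2))^[t] y
    have hpos : 0 < y' (n + 2) 1 := by omega
    have hB : Bproc (n + 2) (Biter (n + 2) (Tmap (n + 2) y) t).1 1 =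
        (Tmap (n + 2) (ladderDec (n + 2) y'), ladderTop (n + 2) y') := by
      rw [ih1, Bproc_Tmap hT' hpos]
    simp only [Biter, hB, Function.iterate_succ_apply', List.countP_append, List.countP_cons,
      List.countP_nil, decide_eq_true_eq]
    refine ⟨rfl, fun j hj => ?_⟩
    have := ih2 j hj
    by_cases hjm : j ≤ ladderTop (n + 2) y'
    · have hjN := (ladderTop_spec hT' hpos).2.1
      have := one_le_ladder hT' hpos hj hjm
      rw [if_pos hjm, ladderDec_of_le y' (by omega) hjm]
      omega
    · rw [if_neg hjm, ladderDec_of_gt y' (by omega)]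
      omega

lemma Tmap_iterate_ladderDec {n : ℕ} {y : ℕ → ℕ → ℕ} (hT : IsTri (n + 2) y) :
    Tmap (n + 2) ((ladderDec (n + 2))^[y (n + 2) 1] y) =
      adjChute (Tmap (n + 1) (delLadder (n + 2) y)) (fun _ => 0) := by
  obtain ⟨hT', hcorner, hoff⟩ := ladderDec_iterate hT (t := y (n + 2) 1) le_rfl
  rw [Tmap_of_corner_eq_zero hT' (by omega)]
  congr 2
  funext i j
  simp only [delLadder]
  split_ifs
  · exact hoff i j (by omega)
  · rfl

lemma delChute_adjChute {N : ℕ} {X : ℕ → ℕ → ℕ} (hX : IsTri N X) (u : ℕ → ℕ) :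
    delChute (adjChute X u) = X := by
  funext p q
  simp only [delChute, adjChute]
  by_cases h : 1 ≤ p ∧ 1 ≤ q
  · rw [if_pos h, if_neg (show p + 1 ≠ 0 by omega), if_neg (show p + 1 ≠ 1 by omega),
      Nat.add_sub_cancel]
  · rw [if_neg h]
    exact (hX.1 p q fun h' => h ⟨h'.1, h'.2.2.1⟩).symm

theorem Tinv_Tmap (N : ℕ) {y : ℕ → ℕ → ℕ} (hT : IsTri N y) : Tinv N (Tmap N y) = y := by
  induction N generalizing y with
  | zero => rfl
  | succ N ih =>
    rcases N with _ | n
    · rfl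
    · have hu1 : udim (n + 2) (Tmap (n + 2) y) 1 = y (n + 2) 1 := by
        rw [(inP_Tmap_of_isTri _ hT).2 1 le_rfl (by omega)]
        exact udim_self _ _
      obtain ⟨hB1, hB2⟩ := Biter_Tmap hT (le_refl (y (n + 2) 1))
      obtain ⟨hT', hcorner, -⟩ := ladderDec_iterate hT (le_refl (y (n + 2) 1))
      have hlad {r : ℕ} (hr : 1 ≤ r) :=
        ladder_eq_zero (r := r) hT' (by rw [hcorner, Nat.sub_self]) hr
      show adjLadder (n + 2) (Tinv (n + 1) (delChute _)) _ = y
      rw [hu1, hB1, Tmap_iterate_ladderDec hT,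
        delChute_adjChute (inP_Tmap_of_isTri _ hT.delLadder).1, ih hT.delLadder]
      funext i j
      simp only [adjLadder, delLadder]
      split_ifs with hij
      · have := hB2 j hij.2.1
        rw [hlad hij.2.1, show n + 2 + 1 - j = i by omega] at this
        omega
      · rfl
      · exact (hT.1 i j (by omega)).symm

end Inverse

lemma InP.congr {n : ℕ} {w w' : ℕ → ℕ} {y : ℕ → ℕ → ℕ} (hy : InP n w y)
    (h : ∀ i, 1 ≤ i → i ≤ n → w i = w' i) : InP n w' y :=
  ⟨hy.1, fun i h1 h2 => (hy.2 i h1 h2).trans (h i h1 h2)⟩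

lemma InP.Tmap {n : ℕ} {w : ℕ → ℕ} {y : ℕ → ℕ → ℕ} (hy : InP n w y) :
    InP n (fun i => w (n + 1 - i)) (Tmap n y) :=
  (inP_Tmap_of_isTri n hy.1).congr fun _ _ _ => hy.2 _ (by omega) (by omega)

lemma finite_setOf_inP (n : ℕ) (w : ℕ → ℕ) : {y : ℕ → ℕ → ℕ | InP n w y}.Finite := by
  set B := (Finset.Icc 1 n).sup w
  let restrict (y : ℕ → ℕ → ℕ) (p : Fin (n + 1) × Fin (n + 1)) : ℕ := y p.1 p.2
  have hbound {y : ℕ → ℕ → ℕ} (hy : InP n w y) (i j : ℕ) : y i j ≤ B := by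
    by_cases hin : 1 ≤ i ∧ i ≤ n ∧ 1 ≤ j ∧ j ≤ n - i + 1
    · calc y i j ≤ udim n y i :=
            Finset.single_le_sum (f := y i) (fun _ _ => Nat.zero_le _)
              (Finset.mem_Icc.2 ⟨hin.2.2.1, hin.2.2.2⟩)
        _ = w i := hy.2 i hin.1 hin.2.1
        _ ≤ B := Finset.le_sup (Finset.mem_Icc.2 ⟨hin.1, hin.2.1⟩)
    · rw [hy.1.1 i j hin]
      exact Nat.zero_le _
  refine Set.Finite.of_finite_image (f := restrict)
    ((Set.finite_Iic fun _ : Fin (n + 1) × Fin (n + 1) => B).subset ?_) ?_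
  · rintro _ ⟨y, hy, rfl⟩ p
    exact hbound hy _ _
  · intro y hy y' hy' h
    funext i j
    by_cases hin : 1 ≤ i ∧ i ≤ n ∧ 1 ≤ j ∧ j ≤ n - i + 1
    · exact congrFun h (⟨i, by omega⟩, ⟨j, by omega⟩)
    · rw [hy.1.1 i j hin, hy'.1.1 i j hin]

/-- Injectivity on both sides forces `|s| = |t|`. -/
lemma Set.bijOn_of_mapsTo_of_leftInvOn {α : Type*} {f g : α → α} {s t : Set α} (hs : s.Finite)
    (hst : Set.MapsTo f s t) (hts : Set.MapsTo f t s) (hgs : Set.LeftInvOn g f s)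
    (hgt : Set.LeftInvOn g f t) : Set.BijOn f s t := by
  have ht : t.Finite := Set.Finite.of_finite_image (hs.subset (Set.image_subset_iff.2 hts))
    hgt.injOn
  refine ⟨hst, hgs.injOn, ?_⟩
  rw [Set.SurjOn, ← Set.eq_of_subset_of_ncard_le (Set.image_subset_iff.2 hst) ?_ ht]
  rw [hgs.injOn.ncard_image]
  exact Set.ncard_le_ncard_of_injOn f hts hgt.injOn hs

theorem Tmap_Tinv_bijections_general (n : ℕ) (w : ℕ → ℕ) :
    Set.BijOn (Tmap n) {y | InP n w y} {y | InP n (fun i => w (n + 1 - i)) y} ∧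
    Set.BijOn (Tinv n) {y | InP n (fun i => w (n + 1 - i)) y} {y | InP n w y} ∧
    (∀ y, InP n (fun i => w (n + 1 - i)) y → Tmap n (Tinv n y) = y) ∧
    (∀ y, InP n w y → Tinv n (Tmap n y) = y) := by
  have hleft (v : ℕ → ℕ) : Set.LeftInvOn (Tinv n) (Tmap n) {y | InP n v y} :=
    fun y hy => Tinv_Tmap n hy.1
  have hback : Set.MapsTo (Tmap n) {y | InP n (fun i => w (n + 1 - i)) y} {y | InP n w y} :=
    fun y hy => hy.Tmap.congr fun i _ _ => by rw [show n + 1 - (n + 1 - i) = i by omega]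
  have hbij := Set.bijOn_of_mapsTo_of_leftInvOn (finite_setOf_inP n w) (fun y hy => hy.Tmap)
    hback (hleft w) (hleft _)
  have hinv : Set.InvOn (Tinv n) (Tmap n) {y | InP n w y} {y | InP n (fun i => w (n + 1 - i)) y} :=
    ⟨hleft w, hbij.image_eq ▸ (hleft w).rightInvOn_image⟩
  exact ⟨hbij, hbij.symm hinv.symm, fun y hy => hinv.2 hy, fun y hy => hinv.1 hy⟩

/-- `T : P(w) → P(w*)` and `T' : P(w*) → P(w)` are bijections,
inverse to one another. -/
theorem Tmap_Tinv_bijections (n : ℕ) (hn : 1 ≤ n) (w : ℕ → ℕ) :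
    Set.BijOn (Tmap n) {y | InP n w y} {y | InP n (fun i => w (n + 1 - i)) y} ∧
    Set.BijOn (Tinv n) {y | InP n (fun i => w (n + 1 - i)) y} {y | InP n w y} ∧
    (∀ y, InP n (fun i => w (n + 1 - i)) y → Tmap n (Tinv n y) = y) ∧
    (∀ y, InP n w y → Tinv n (Tmap n y) = y) :=
  Tmap_Tinv_bijections_general n w
end

section
/- Let Y ∈ P(w) and let x ∈ O_Y. Then there is a unique kernel flag of type Y preserved by x, namely V_{ij} = ker(x_{i+j-1} ∘ ... ∘ x_{i+1} ∘ x_i); moreover the maps V_{ij}/V_{i,j-1} → V_{i+1,j-1}/V_{i+1,j-2} induced by x_i are injective for all j > 1. -/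
open scoped BigOperators Classical

/-!
The composite `x_{i+j-1} ∘ ⋯ ∘ x_i` sends the Jordan basis vector `u_{ih}^{(k)}` to
`u_{i+j,h-j}^{(k)}` when `h > j` and to `0` otherwise (the ladder inequalities of `Y` keep these
indices in range), so by rank–nullity its kernel has dimension `y_{i1} + ⋯ + y_{ij}`. These kernels
form a flag which `x` preserves, since `v` lies in the kernel of the `j`-fold composite from vertex
`i` iff `x_i v` lies in that of the `(j-1)`-fold composite from vertex `i+1`; the same equivalence
gives the injectivity statement. If `V` is any kernel flag preserved by `x`, induction on `j` gives
`V_{ij} ⊆ ker(x_{i+j-1} ∘ ⋯ ∘ x_i)`, and the dimensions agree.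
-/

theorem eq_zero_of_dim_eq_zero {d : ℕ} (hd : d = 0) (v : Fin d → ℂ) : v = 0 := by
  subst hd
  exact Subsingleton.elim _ _

theorem eq_zero_iff_of_heq {F : ℕ → Type*} [∀ a, Zero (F a)] {a b : ℕ} (h : a = b) {A : F a}
    {B : F b} (hAB : HEq A B) : A = 0 ↔ B = 0 := by
  subst h
  rw [eq_of_heq hAB]

theorem Finset.sum_Icc_one_add_sum_Icc {M : Type*} [AddCommMonoid M] (f : ℕ → M) {j N : ℕ}
    (hj : j ≤ N) : ∑ h ∈ Finset.Icc 1 j, f h + ∑ h ∈ Finset.Icc (j + 1) N, f h =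
      ∑ h ∈ Finset.Icc 1 N, f h := by
  have hIcc : ∀ b, Finset.Icc 1 b = Finset.Ioc 0 b := Finset.Icc_add_one_left_eq_Ioc 0
  rw [Finset.Icc_add_one_left_eq_Ioc, hIcc, hIcc, Finset.sum_Ioc_consecutive _ (Nat.zero_le j) hj]

theorem LinearMap.finrank_range_eq_card {K V W ι κ : Type*} [DivisionRing K] [AddCommGroup V]
    [Module K V] [AddCommGroup W] [Module K W] [Fintype κ] {f : V →ₗ[K] W}
    {b : ι → V} (hb : Submodule.span K (Set.range b) = ⊤) {e : κ → ι}
    (hli : LinearIndependent K (f ∘ b ∘ e)) (hzero : ∀ i, i ∉ Set.range e → f (b i) = 0) :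
    Module.finrank K (LinearMap.range f) = Fintype.card κ := by
  suffices LinearMap.range f = Submodule.span K (Set.range (f ∘ b ∘ e)) by
    rw [this, finrank_span_eq_card hli]
  rw [LinearMap.range_eq_map, ← hb, Submodule.map_span, ← Set.range_comp]
  refine le_antisymm (Submodule.span_le.mpr ?_)
    (Submodule.span_mono (Set.range_comp_subset_range e (f ∘ b)))
  rintro _ ⟨i, rfl⟩
  by_cases hi : i ∈ Set.range e
  · obtain ⟨k, rfl⟩ := hi
    exact Submodule.subset_span ⟨k, rfl⟩
  · simp only [Function.comp_apply, hzero i hi, SetLike.mem_coe, Submodule.zero_mem]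

theorem IsTri.le_ladder {n : ℕ} {y : ℕ → ℕ → ℕ} (hy : IsTri n y) {i j m : ℕ} (hi : 1 ≤ i)
    (hij : i + j ≤ n + 1) (hm : m < j) : y i j ≤ y (i + m) (j - m) := by
  induction m with
  | zero => simp
  | succ m ih =>
    have hstep := hy.2 (i + m + 1) (j - (m + 1)) (by omega) (by omega) (by omega) (by omega)
    rw [show i + m + 1 - 1 = i + m by omega, show j - (m + 1) + 1 = j - m by omega] at hstep
    exact (ih (by omega)).trans hstep

/-- The indices `(h, k)` of the Jordan basis vectors `u_{ih}^{(k)}` of chute `i` with `h > j`. -/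
def jordanIndexAbove (n : ℕ) (y : ℕ → ℕ → ℕ) (i j : ℕ) : Finset ((_ : ℕ) × ℕ) :=
  (Finset.Icc (j + 1) (n - i + 1)).sigma fun h => Finset.Icc 1 (y i h)

theorem mem_jordanIndexAbove {n : ℕ} {y : ℕ → ℕ → ℕ} {i j : ℕ} {p : (_ : ℕ) × ℕ} :
    p ∈ jordanIndexAbove n y i j ↔ j + 1 ≤ p.1 ∧ p.1 ≤ n - i + 1 ∧ 1 ≤ p.2 ∧ p.2 ≤ y i p.1 := by
  simp only [jordanIndexAbove, Finset.mem_sigma, Finset.mem_Icc, and_assoc]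

theorem card_jordanIndexAbove (n : ℕ) (y : ℕ → ℕ → ℕ) (i j : ℕ) :
    (jordanIndexAbove n y i j).card = ∑ h ∈ Finset.Icc (j + 1) (n - i + 1), y i h := by
  simp [jordanIndexAbove, Finset.card_sigma]

section KernelFlag

variable {n : ℕ} {w : ℕ → ℕ} {y : ℕ → ℕ → ℕ}
  {x : ∀ m : ℕ, (Fin (w m) → ℂ) →ₗ[ℂ] (Fin (w (m + 1)) → ℂ)} {u : ∀ m : ℕ, ℕ → ℕ → (Fin (w m) → ℂ)}

theorem chainMap_succ_heq (i : ℕ) (v : Fin (w i) → ℂ) (m : ℕ) :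
    HEq (chainMap w x i (m + 1) v) (chainMap w x (i + 1) m (x i v)) := by
  induction m with
  | zero => rfl
  | succ m ih =>
    have hx : ∀ {a b : ℕ}, a = b → ∀ {A : Fin (w a) → ℂ} {B : Fin (w b) → ℂ},
        HEq A B → HEq (x a A) (x b B) := by
      rintro a _ rfl A B hAB
      rw [eq_of_heq hAB]
    exact hx (by omega) ih

theorem mem_kerFlag_succ_iff {i : ℕ} {v : Fin (w i) → ℂ} {m : ℕ} :
    v ∈ kerFlag w x i (m + 1) ↔ x i v ∈ kerFlag w x (i + 1) m :=
  eq_zero_iff_of_heq (F := fun a => Fin (w a) → ℂ) (by omega) (chainMap_succ_heq i v m)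

theorem linearIndependent_jordanBasis_shift (hy : IsTri n y) (hu : IsJordanBasis n w y x u)
    {i j : ℕ} (hi : 1 ≤ i) (hin : i ≤ n) (hij : i + j ≤ n + 1) :
    LinearIndependent ℂ fun p : jordanIndexAbove n y i j => u (i + j) (p.1.1 - j) p.1.2 := by
  by_cases hijn : i + j ≤ n
  · let e : jordanIndexAbove n y i j →
        {p : ℕ × ℕ // 1 ≤ p.1 ∧ p.1 ≤ n - (i + j) + 1 ∧ 1 ≤ p.2 ∧ p.2 ≤ y (i + j) p.1} :=
      fun p => ⟨(p.1.1 - j, p.1.2), by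
        obtain ⟨h1, h2, h3, h4⟩ := mem_jordanIndexAbove.mp p.2
        exact ⟨by omega, by omega, h3, h4.trans (hy.le_ladder hi (by omega) (by omega))⟩⟩
    have he : Function.Injective e := by
      rintro ⟨⟨a, k⟩, ha⟩ ⟨⟨b, l⟩, hb⟩ hab
      have ha' := (mem_jordanIndexAbove.mp ha).1
      have hb' := (mem_jordanIndexAbove.mp hb).1
      simp only [e, Subtype.mk.injEq, Prod.mk.injEq] at hab ha' hb'
      obtain ⟨hab, rfl⟩ := hab
      obtain rfl : a = b := by omega
      rfl
    exact (hu.1 (i + j) (by omega) hijn).1.comp e he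
  · have hempty : jordanIndexAbove n y i j = ∅ := by
      refine Finset.eq_empty_of_forall_notMem fun p hp => ?_
      have := mem_jordanIndexAbove.mp hp
      omega
    have : IsEmpty (jordanIndexAbove n y i j) := Finset.isEmpty_coe_sort.mpr hempty
    exact linearIndependent_empty_type

variable (hw0 : ∀ m, m = 0 ∨ n < m → w m = 0)
include hw0

theorem chainMap_jordanBasis (hy : IsTri n y) (hu : IsJordanBasis n w y x u) {i j k : ℕ}
    (hi : 1 ≤ i) (hj : 1 ≤ j) (hij : i + j ≤ n + 1) (hk : 1 ≤ k) (hky : k ≤ y i j) (m : ℕ) :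
    chainMap w x i m (u i j k) = if m < j then u (i + m) (j - m) k else 0 := by
  induction m with
  | zero =>
    rw [if_pos (by omega)]
    rfl
  | succ m ih =>
    show x (i + m) (chainMap w x i m (u i j k)) = _
    have hky' : ∀ hm : m < j, k ≤ y (i + m) (j - m) := fun hm => hky.trans (hy.le_ladder hi hij hm)
    rcases lt_trichotomy (m + 1) j with hlt | heq | hgt
    · rw [ih, if_pos (by omega), if_pos hlt,
        hu.2 _ _ k (by omega) (by omega) (by omega) (by omega) hk (hky' (by omega)),
        if_pos (by omega)]
      rfl
    · rw [ih, if_pos (by omega), if_neg (by omega)]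
      by_cases hin : i + m + 1 ≤ n
      · rw [hu.2 _ _ k (by omega) hin (by omega) (by omega) hk (hky' (by omega)), if_neg (by omega)]
      · exact eq_zero_of_dim_eq_zero (hw0 _ (Or.inr (by omega))) _
    · rw [ih, if_neg (by omega), if_neg (by omega), map_zero]

theorem finrank_range_chainMap (hy : IsTri n y) (hu : IsJordanBasis n w y x u) {i j : ℕ}
    (hi : 1 ≤ i) (hin : i ≤ n) (hij : i + j ≤ n + 1) :
    Module.finrank ℂ (LinearMap.range (chainMap w x i j)) =
      ∑ h ∈ Finset.Icc (j + 1) (n - i + 1), y i h := by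
  let e : jordanIndexAbove n y i j →
      {p : ℕ × ℕ // 1 ≤ p.1 ∧ p.1 ≤ n - i + 1 ∧ 1 ≤ p.2 ∧ p.2 ≤ y i p.1} :=
    fun p => ⟨(p.1.1, p.1.2), by
      obtain ⟨h1, h2, h3, h4⟩ := mem_jordanIndexAbove.mp p.2
      exact ⟨by omega, h2, h3, h4⟩⟩
  have hli : LinearIndependent ℂ (chainMap w x i j ∘ (fun p => u i p.1.1 p.1.2) ∘ e) := by
    convert linearIndependent_jordanBasis_shift hy hu hi hin hij using 1
    funext p
    obtain ⟨h1, h2, h3, h4⟩ := mem_jordanIndexAbove.mp p.2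
    exact (chainMap_jordanBasis hw0 hy hu hi (by omega) (by omega) h3 h4 j).trans (if_pos h1)
  have hzero : ∀ q, q ∉ Set.range e → chainMap w x i j (u i q.1.1 q.1.2) = 0 := by
    rintro ⟨⟨h, k⟩, hq⟩ hne
    have hhj : h ≤ j := by
      by_contra! hlt
      exact hne ⟨⟨⟨h, k⟩, mem_jordanIndexAbove.mpr ⟨hlt, hq.2⟩⟩, rfl⟩
    rw [chainMap_jordanBasis hw0 hy hu hi hq.1 (by omega) hq.2.2.1 hq.2.2.2, if_neg (by omega)]
  rw [LinearMap.finrank_range_eq_card (hu.1 i hi hin).2 hli hzero, Fintype.card_coe,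
    card_jordanIndexAbove]

theorem finrank_kerFlag (hy : InP n w y) (hu : IsJordanBasis n w y x u) {i j : ℕ} (hi : 1 ≤ i)
    (hin : i ≤ n) (hij : i + j ≤ n + 1) :
    Module.finrank ℂ (kerFlag w x i j) = ∑ h ∈ Finset.Icc 1 j, y i h := by
  have hrank := LinearMap.finrank_range_add_finrank_ker (chainMap w x i j)
  have hsplit := Finset.sum_Icc_one_add_sum_Icc (y i) (by omega : j ≤ n - i + 1)
  have hwi := hy.2 i hi hin
  rw [udim, ← hsplit] at hwi
  rw [finrank_range_chainMap hw0 hy.1 hu hi hin hij, Module.finrank_fin_fun] at hrank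
  exact Nat.add_left_cancel (hrank.trans (hwi.symm.trans (add_comm _ _)))

theorem isKerFlag_kerFlag (hy : InP n w y) (hu : IsJordanBasis n w y x u) :
    IsKerFlag n w y (kerFlag w x) := by
  intro i hi hin
  refine ⟨LinearMap.ker_id, fun j _ => LinearMap.ker_le_ker_comp _ _, ?_, fun j _ hj =>
    finrank_kerFlag hw0 hy hu hi hin (by omega)⟩
  exact eq_top_iff.mpr fun v _ =>
    eq_zero_of_dim_eq_zero (hw0 (i + (n - i + 1)) (Or.inr (by omega))) _

theorem le_kerFlag_of_preservesFlag {V : ∀ i : ℕ, ℕ → Submodule ℂ (Fin (w i) → ℂ)}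
    (hV : ∀ i, 1 ≤ i → i ≤ n → V i 0 = ⊥) (hP : PreservesFlag n w x V) :
    ∀ j i, 1 ≤ i → i ≤ n → i + j ≤ n + 1 → V i j ≤ kerFlag w x i j := by
  intro j
  induction j with
  | zero =>
    intro i hi hin _
    rw [hV i hi hin]
    exact bot_le
  | succ j ih =>
    intro i hi _ hij v hv
    by_cases hin : i + 1 ≤ n
    · rcases Nat.eq_zero_or_pos j with rfl | hj
      · exact (hP i hi hin 1 le_rfl (by omega) v hv).1 rfl
      · refine mem_kerFlag_succ_iff.mpr (ih (i + 1) (by omega) hin (by omega) ?_)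
        exact (hP i hi hin (j + 1) (by omega) (by omega) v hv).2 (by omega)
    · exact eq_zero_of_dim_eq_zero (hw0 _ (Or.inr (by omega))) _

end KernelFlag

theorem kernel_flag_unique_and_injective_general (n : ℕ) (w : ℕ → ℕ)
    (hw0 : ∀ m, m = 0 ∨ n < m → w m = 0)
    (y : ℕ → ℕ → ℕ) (hy : InP n w y)
    (x : ∀ m : ℕ, (Fin (w m) → ℂ) →ₗ[ℂ] (Fin (w (m + 1)) → ℂ))
    (u : ∀ m : ℕ, ℕ → ℕ → (Fin (w m) → ℂ)) (hu : IsJordanBasis n w y x u) :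
    IsKerFlag n w y (kerFlag w x) ∧
    PreservesFlag n w x (kerFlag w x) ∧
    (∀ V : ∀ i : ℕ, ℕ → Submodule ℂ (Fin (w i) → ℂ),
      IsKerFlag n w y V → PreservesFlag n w x V →
      ∀ i j, 1 ≤ i → i ≤ n → 1 ≤ j → j ≤ n - i + 1 → V i j = kerFlag w x i j) ∧
    (∀ i j, 1 ≤ i → i + 1 ≤ n → 2 ≤ j → j ≤ n - i + 1 →
      ∀ v ∈ kerFlag w x i j, x i v ∈ kerFlag w x (i + 1) (j - 2) → v ∈ kerFlag w x i (j - 1)) := by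
  refine ⟨isKerFlag_kerFlag hw0 hy hu, ?_, ?_, ?_⟩
  · intro i _ _ j _ _ v hv
    refine ⟨fun hj => by subst hj; exact hv, fun hj => ?_⟩
    obtain ⟨j, rfl⟩ : ∃ j', j = j' + 1 := ⟨j - 1, by omega⟩
    exact mem_kerFlag_succ_iff.mp hv
  · intro V hV hP i j hi hin _ hj
    have hle := le_kerFlag_of_preservesFlag hw0 (fun i hi hin => (hV i hi hin).1) hP j i hi hin
      (by omega)
    refine Submodule.eq_of_le_of_finrank_eq hle ?_
    rw [(hV i hi hin).2.2.2 j (by omega) hj, finrank_kerFlag hw0 hy hu hi hin (by omega)]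
  · intro i j _ _ hj _ v _ hxv
    obtain ⟨j, rfl⟩ : ∃ j', j = j' + 2 := ⟨j - 2, by omega⟩
    exact mem_kerFlag_succ_iff.mpr hxv

/-- If `x ∈ O_Y`, there is a unique kernel flag of type `Y` preserved by
`x`, namely `V i j = ker (x_{i+j-1} ∘ ⋯ ∘ x_i)`; moreover the induced maps
`V_{ij}/V_{i,j-1} → V_{i+1,j-1}/V_{i+1,j-2}` are injective for `j > 1`. -/
theorem kernel_flag_unique_and_injective (n : ℕ) (hn : 1 ≤ n) (w : ℕ → ℕ)
    (hw0 : ∀ m, m = 0 ∨ n < m → w m = 0)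
    (y : ℕ → ℕ → ℕ) (hy : InP n w y)
    (x : ∀ m : ℕ, (Fin (w m) → ℂ) →ₗ[ℂ] (Fin (w (m + 1)) → ℂ))
    (u : ∀ m : ℕ, ℕ → ℕ → (Fin (w m) → ℂ)) (hu : IsJordanBasis n w y x u) :
    IsKerFlag n w y (kerFlag w x) ∧
    PreservesFlag n w x (kerFlag w x) ∧
    (∀ V : ∀ i : ℕ, ℕ → Submodule ℂ (Fin (w i) → ℂ),
      IsKerFlag n w y V → PreservesFlag n w x V →
      ∀ i j, 1 ≤ i → i ≤ n → 1 ≤ j → j ≤ n - i + 1 → V i j = kerFlag w x i j) ∧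
    (∀ i j, 1 ≤ i → i + 1 ≤ n → 2 ≤ j → j ≤ n - i + 1 →
      ∀ v ∈ kerFlag w x i j, x i v ∈ kerFlag w x (i + 1) (j - 2) → v ∈ kerFlag w x i (j - 1)) :=
  kernel_flag_unique_and_injective_general n w hw0 y hy x u hu
end
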